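/- arXiv:2506.19432 — 4 statements merged into one kernel-verified Lean document; each statement's English description precedes it below -/
import Mathlib

section
/- Let Q be a quiver and V, W finite-dimensional representations with dimension vectors d and d'. Then ⟨d,d'⟩ = dim Hom(V,W) − dim Ext¹(V,W), where ⟨−,−⟩ is the Euler form of Q and Ext¹(V,W) is the cokernel of the map ⊕_{i∈Q0} Hom_k(V_i,W_i) → ⊕_{a∈Q1} Hom_k(V_{s(a)}, W_{t(a)}), φ ↦ (W_a φ_{s(a)} − φ_{t(a)} V_a)_a. -/
open Module

namespace QT

/-- A (finite) quiver: finite sets of vertices and arrows, with source and target maps. -/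
structure Quiv where
  V : Type
  A : Type
  [fv : Fintype V]
  [fa : Fintype A]
  s : A → V
  t : A → V

attribute [instance] Quiv.fv Quiv.fa

/-- The Euler form of a quiver. -/
def eulerForm (Q : Quiv) (d e : Q.V → ℤ) : ℤ :=
  (∑ i, d i * e i) - ∑ a, d (Q.s a) * e (Q.t a)

/-- The Kac form: symmetrization of the Euler form. -/
def kacForm (Q : Quiv) (d e : Q.V → ℤ) : ℤ :=
  eulerForm Q d e + eulerForm Q e d

/-- Cast a dimension vector to an integral vector. -/
def castN {Q : Quiv} (d : Q.V → ℕ) : Q.V → ℤ := fun i => (d i : ℤ)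

/-- A finite-dimensional representation of a quiver over a field `k`. -/
structure Rep (Q : Quiv) (k : Type) [Field k] where
  M : Q.V → Type
  [acg : ∀ i, AddCommGroup (M i)]
  [mod : ∀ i, Module k (M i)]
  [fd : ∀ i, FiniteDimensional k (M i)]
  f : ∀ a, M (Q.s a) →ₗ[k] M (Q.t a)

attribute [instance] Rep.acg Rep.mod Rep.fd

/-- The dimension vector of a representation. -/
noncomputable def dimVec {Q : Quiv} {k : Type} [Field k] (V : Rep Q k) : Q.V → ℕ :=
  fun i => finrank k (V.M i)

/-- The standard linear map whose kernel is `Hom(V,W)` and whose cokernel is `Ext¹(V,W)`. -/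
def Phi {Q : Quiv} {k : Type} [Field k] (V W : Rep Q k) :
    (∀ i, V.M i →ₗ[k] W.M i) →ₗ[k] (∀ a, V.M (Q.s a) →ₗ[k] W.M (Q.t a)) where
  toFun φ := fun a => W.f a ∘ₗ φ (Q.s a) - φ (Q.t a) ∘ₗ V.f a
  map_add' φ ψ := by
    funext a
    simp only [Pi.add_apply, LinearMap.comp_add, LinearMap.add_comp]
    abel
  map_smul' c φ := by
    funext a
    simp only [Pi.smul_apply, LinearMap.comp_smul, LinearMap.smul_comp, RingHom.id_apply,
      smul_sub]

/-- A subrepresentation, given as a compatible family of submodules. -/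
structure Subrep {Q : Quiv} {k : Type} [Field k] (V : Rep Q k) where
  S : ∀ i, Submodule k (V.M i)
  compat : ∀ a, ∀ x ∈ S (Q.s a), V.f a x ∈ S (Q.t a)

/-- Dimension vector of a subrepresentation. -/
noncomputable def Subrep.dim {Q : Quiv} {k : Type} [Field k] {V : Rep Q k} (T : Subrep V) : Q.V → ℕ :=
  fun i => finrank k (T.S i)

/-- Pointwise containment of subrepresentations. -/
def SubrepLE {Q : Quiv} {k : Type} [Field k] {V : Rep Q k} (T T' : Subrep V) : Prop :=
  ∀ i, T.S i ≤ T'.S i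

/-- The zero subrepresentation. -/
def botSub {Q : Quiv} {k : Type} [Field k] (V : Rep Q k) : Subrep V :=
  ⟨fun _ => ⊥, by intro a x hx; simp only [Submodule.mem_bot] at hx ⊢; simp [hx]⟩

/-- The full subrepresentation. -/
def topSub {Q : Quiv} {k : Type} [Field k] (V : Rep Q k) : Subrep V :=
  ⟨fun _ => ⊤, by intro a x _; trivial⟩

/-- The slope `μ(e) = θ(e)/(a·e)` of an integral vector. -/
def slopeZ {Q : Quiv} (θ : Q.V → ℤ) (a : Q.V → ℕ) (e : Q.V → ℤ) : ℚ :=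
  (∑ i, (θ i : ℚ) * (e i : ℚ)) / ∑ i, (a i : ℚ) * (e i : ℚ)

/-- The slope of a dimension vector. -/
def slope {Q : Quiv} (θ : Q.V → ℤ) (a : Q.V → ℕ) (e : Q.V → ℕ) : ℚ :=
  slopeZ θ a (castN e)

/-- Dimension vector of the subquotient `T'/T`. -/
noncomputable def quotDim {Q : Quiv} {k : Type} [Field k] {V : Rep Q k} (T T' : Subrep V) : Q.V → ℤ :=
  fun i => (T'.dim i : ℤ) - (T.dim i : ℤ)

/-- `μ`-semistability of a representation. -/
def IsSemistable {Q : Quiv} {k : Type} [Field k] (θ : Q.V → ℤ) (a : Q.V → ℕ)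
    (V : Rep Q k) : Prop :=
  ∀ T : Subrep V, T.dim ≠ 0 → slope θ a T.dim ≤ slope θ a (dimVec V)

/-- `μ`-semistability of the subquotient `T'/T`, expressed via intermediate
subrepresentations (which correspond to subrepresentations of `T'/T`). -/
def IsSemistableQuot {Q : Quiv} {k : Type} [Field k] {V : Rep Q k} (θ : Q.V → ℤ)
    (a : Q.V → ℕ) (T T' : Subrep V) : Prop :=
  ∀ U : Subrep V, SubrepLE T U → SubrepLE U T' → U.dim ≠ T.dim →
    slopeZ θ a (quotDim T U) ≤ slopeZ θ a (quotDim T T')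

/-- A Harder–Narasimhan filtration of `V` of length `ℓ`. -/
structure IsHNFiltration {Q : Quiv} {k : Type} [Field k] (θ : Q.V → ℤ) (a : Q.V → ℕ)
    (V : Rep Q k) (ℓ : ℕ) (F : Fin (ℓ + 1) → Subrep V) : Prop where
  zero : F 0 = botSub V
  last : F (Fin.last ℓ) = topSub V
  mono : ∀ i : Fin ℓ, SubrepLE (F i.castSucc) (F i.succ)
  proper : ∀ i : Fin ℓ, (F i.castSucc).dim ≠ (F i.succ).dim
  semistable : ∀ i : Fin ℓ, IsSemistableQuot θ a (F i.castSucc) (F i.succ)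
  slopes : ∀ i j : Fin ℓ, i < j →
    slopeZ θ a (quotDim (F j.castSucc) (F j.succ)) <
      slopeZ θ a (quotDim (F i.castSucc) (F i.succ))

/-- `e` is a general subdimension vector of `d`: every representation of dimension
vector `d` (over `ℂ`) admits a subrepresentation of dimension vector `e`. -/
def GeneralSub (Q : Quiv) (e d : Q.V → ℕ) : Prop :=
  e ≤ d ∧ ∀ V : Rep Q ℂ, dimVec V = d → ∃ T : Subrep V, T.dim = e

/-- `f` is a general quotient dimension vector of `d`: every representation of
dimension vector `d` admits a quotient of dimension vector `f`, equivalently a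
subrepresentation of dimension vector `d - f`. -/
def GeneralQuot (Q : Quiv) (d f : Q.V → ℕ) : Prop :=
  f ≤ d ∧ ∀ V : Rep Q ℂ, dimVec V = d → ∃ T : Subrep V, T.dim = fun i => d i - f i

/-- The set of values `dim Ext¹(V,W)` for `V,W` of dimension vectors `d,d'`. -/
def extSet (Q : Quiv) (d d' : Q.V → ℕ) : Set ℕ :=
  {n | ∃ (V : Rep Q ℂ) (W : Rep Q ℂ), dimVec V = d ∧ dimVec W = d' ∧
    n = finrank ℂ ((∀ a, V.M (Q.s a) →ₗ[ℂ] W.M (Q.t a)) ⧸ LinearMap.range (Phi V W))}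

/-- The general (minimal) dimension of `Ext¹` between representations of
dimension vectors `d` and `d'`. -/
noncomputable def extDim (Q : Quiv) (d d' : Q.V → ℕ) : ℕ := sInf (extSet Q d d')

/-- The set of values `dim Hom(V,W)` for `V,W` of dimension vectors `d,d'`. -/
def homSet (Q : Quiv) (d d' : Q.V → ℕ) : Set ℕ :=
  {n | ∃ (V : Rep Q ℂ) (W : Rep Q ℂ), dimVec V = d ∧ dimVec W = d' ∧
    n = finrank ℂ (LinearMap.ker (Phi V W))}

/-- The general (minimal) dimension of `Hom` between representations of
dimension vectors `d` and `d'`. -/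
noncomputable def homDim (Q : Quiv) (d d' : Q.V → ℕ) : ℕ := sInf (homSet Q d d')

/-- Direct sum of a finite family of representations. -/
def dsum {Q : Quiv} {k : Type} [Field k] {n : ℕ} (F : Fin n → Rep Q k) : Rep Q k where
  M i := ∀ j, (F j).M i
  f a := LinearMap.pi fun j => (F j).f a ∘ₗ LinearMap.proj j

/-- Isomorphism of representations. -/
def RepIso {Q : Quiv} {k : Type} [Field k] (V W : Rep Q k) : Prop :=
  ∃ φ : ∀ i, V.M i ≃ₗ[k] W.M i,
    ∀ a, ∀ x : V.M (Q.s a), φ (Q.t a) (V.f a x) = W.f a (φ (Q.s a) x)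

/-- A representation is nonzero if its dimension vector is nonzero. -/
def RepNonzero {Q : Quiv} {k : Type} [Field k] (V : Rep Q k) : Prop :=
  dimVec V ≠ 0

/-- A representation is indecomposable if it is nonzero and not isomorphic to the
direct sum of two nonzero representations. -/
def Indecomposable {Q : Quiv} {k : Type} [Field k] (V : Rep Q k) : Prop :=
  RepNonzero V ∧ ∀ A B : Rep Q k, RepNonzero A → RepNonzero B → ¬ RepIso V (dsum ![A, B])

/-- The `m`-Kronecker quiver: two vertices and `m` arrows from vertex `0` to vertex `1`. -/
def kronecker (m : ℕ) : Quiv where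
  V := Fin 2
  A := Fin m
  s := fun _ => 0
  t := fun _ => 1

/-- A quiver is acyclic if it has no directed cycles. -/
def Acyclic (Q : Quiv) : Prop :=
  ∀ i : Q.V, ¬ Relation.TransGen (fun i j => ∃ a, Q.s a = i ∧ Q.t a = j) i i

/-- A representation of dimension vector `e` which is semistable exists. -/
def HasSemistableRep (Q : Quiv) (θ : Q.V → ℤ) (a : Q.V → ℕ) (e : Q.V → ℕ) : Prop :=
  ∃ V : Rep Q ℂ, dimVec V = e ∧ IsSemistable θ a V

/-- A Harder–Narasimhan type: a nonempty list of nonzero semistable dimension vectors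
summing to `d`, with strictly decreasing slopes. -/
def IsHNType (Q : Quiv) (θ : Q.V → ℤ) (a : Q.V → ℕ) (d : Q.V → ℕ)
    (L : List (Q.V → ℕ)) : Prop :=
  L ≠ [] ∧ (∀ e ∈ L, e ≠ 0 ∧ HasSemistableRep Q θ a e) ∧ L.sum = d ∧
    L.Chain' (fun e e' => slope θ a e' < slope θ a e)


/-- `⟨d,d'⟩ = dim Hom(V,W) - dim Ext¹(V,W)`. -/
theorem eulerForm_eq_hom_sub_ext (Q : Quiv) (k : Type) [Field k] (V W : Rep Q k) :
    eulerForm Q (castN (dimVec V)) (castN (dimVec W)) =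
      (finrank k (LinearMap.ker (Phi V W)) : ℤ) -
        (finrank k ((∀ a, V.M (Q.s a) →ₗ[k] W.M (Q.t a)) ⧸
          LinearMap.range (Phi V W)) : ℤ) := by
  have h1 : finrank k (LinearMap.ker (Phi V W)) + finrank k (LinearMap.range (Phi V W))
      = finrank k (∀ i, V.M i →ₗ[k] W.M i) := by
    rw [add_comm]; exact LinearMap.finrank_range_add_finrank_ker (Phi V W)
  have h2 : finrank k (LinearMap.range (Phi V W)) +
      finrank k ((∀ a, V.M (Q.s a) →ₗ[k] W.M (Q.t a)) ⧸ LinearMap.range (Phi V W))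
      = finrank k (∀ a, V.M (Q.s a) →ₗ[k] W.M (Q.t a)) := by
    rw [add_comm]; exact Submodule.finrank_quotient_add_finrank _
  have hdom : finrank k (∀ i, V.M i →ₗ[k] W.M i) = ∑ i, dimVec V i * dimVec W i := by
    rw [Module.finrank_pi_fintype]
    exact Finset.sum_congr rfl fun i _ => Module.finrank_linearMap k k (V.M i) (W.M i)
  have hcod : finrank k (∀ a, V.M (Q.s a) →ₗ[k] W.M (Q.t a))
      = ∑ a, dimVec V (Q.s a) * dimVec W (Q.t a) := by
    rw [Module.finrank_pi_fintype]
    exact Finset.sum_congr rfl fun a _ => Module.finrank_linearMap k k _ _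
  have := congrArg (Nat.cast : ℕ → ℤ) h1
  have := congrArg (Nat.cast : ℕ → ℤ) h2
  simp only [Nat.cast_add, hdom, hcod, Nat.cast_sum, Nat.cast_mul] at *
  unfold eulerForm castN
  omega


end QT
end

section
/- Every finite-dimensional representation V of a quiver Q admits at most one filtration 0 = V⁰ ⊂ V¹ ⊂ … ⊂ V^ℓ = V such that each successive quotient W^i = V^i/V^{i−1} is μ-semistable and μ(dim W^1) > μ(dim W^2) > … > μ(dim W^ℓ) (uniqueness of the Harder–Narasimhan filtration). -/
open Module

namespace QT

/-!
The first step `F¹` of a Harder–Narasimhan filtration is the maximal destabilizing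
subrepresentation: every subrepresentation `U` has `μ(U) ≤ μ(F¹)`, strictly unless `U ⊆ F¹`.
For `U ⊄ F¹` this comes from the exact sequence `0 → U ∩ F¹ → U → (U + F¹)/F¹ → 0`: the left
term has slope at most `μ(F¹)` by semistability, and the right one slope below `μ(F¹)` because,
by induction on the length, `(U + F¹)/F¹` is bounded by the first step `F²/F¹` of the
filtration of `V/F¹`. Two HN filtrations therefore share their first step, and the rest of
them are HN filtrations of `V/F¹`.
-/

section HNUniqueness

variable {Q : Quiv} {k : Type} [Field k] {V : Rep Q k} {θ : Q.V → ℤ} {a : Q.V → ℕ}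

lemma slopeZ_denom_pos (ha : ∀ i, 0 < a i) {e : Q.V → ℤ} (he : 0 < e) :
    0 < ∑ i, (a i : ℚ) * (e i : ℚ) := by
  obtain ⟨he, i, hi⟩ := Pi.lt_def.mp he
  refine Finset.sum_pos' (fun j _ => ?_) ⟨i, Finset.mem_univ i, ?_⟩
  · exact mul_nonneg (Nat.cast_nonneg _) (Int.cast_nonneg_iff.mpr (he j))
  · exact mul_pos (Nat.cast_pos.mpr (ha i)) (Int.cast_pos.mpr hi)

lemma slopeZ_add_lt (ha : ∀ i, 0 < a i) {e f : Q.V → ℤ} (he : 0 < e) (hf : 0 < f) {c : ℚ}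
    (hec : slopeZ θ a e ≤ c) (hfc : slopeZ θ a f < c) : slopeZ θ a (e + f) < c := by
  have hsum : ∀ w : Q.V → ℚ,
      ∑ i, w i * (((e + f) i : ℤ) : ℚ) = ∑ i, w i * (e i : ℚ) + ∑ i, w i * (f i : ℚ) := by
    intro w
    simp only [Pi.add_apply, Int.cast_add, mul_add, Finset.sum_add_distrib]
  have hpe := slopeZ_denom_pos ha he
  have hpf := slopeZ_denom_pos ha hf
  unfold slopeZ at *
  rw [div_le_iff₀ hpe] at hec
  rw [div_lt_iff₀ hpf] at hfc
  rw [hsum, hsum, div_lt_iff₀ (add_pos hpe hpf)]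
  linarith

@[ext]
lemma Subrep.ext {T T' : Subrep V} (h : ∀ i, T.S i = T'.S i) : T = T' := by
  cases T
  cases T'
  simp only [Subrep.mk.injEq]
  exact funext h

lemma Subrep.eq_of_le_of_dim_eq {T T' : Subrep V} (h : SubrepLE T T') (hd : T.dim = T'.dim) :
    T = T' :=
  Subrep.ext fun i => Submodule.eq_of_le_of_finrank_eq (h i) (congrFun hd i)

lemma Subrep.eq_top_of_top_le {T : Subrep V} (h : SubrepLE (topSub V) T) : T = topSub V :=
  Subrep.ext fun i => top_le_iff.mp (h i)

def Subrep.sup (T T' : Subrep V) : Subrep V where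
  S i := T.S i ⊔ T'.S i
  compat a x hx := by
    have hmap : (T.S (Q.s a) ⊔ T'.S (Q.s a)).map (V.f a) ≤ T.S (Q.t a) ⊔ T'.S (Q.t a) := by
      rw [Submodule.map_sup]
      exact sup_le_sup (Submodule.map_le_iff_le_comap.mpr (T.compat a))
        (Submodule.map_le_iff_le_comap.mpr (T'.compat a))
    exact hmap ⟨x, hx, rfl⟩

def Subrep.inf (T T' : Subrep V) : Subrep V where
  S i := T.S i ⊓ T'.S i
  compat a x hx := ⟨T.compat a x hx.1, T'.compat a x hx.2⟩

lemma quotDim_add (T W U : Subrep V) : quotDim T W + quotDim W U = quotDim T U := by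
  funext i
  simp only [quotDim, Pi.add_apply]
  ring

/-- The dimension count behind the isomorphism `(U + F)/F ≅ U/(U ∩ F)`. -/
lemma quotDim_sup_eq_quotDim_inf (U F : Subrep V) :
    quotDim F (U.sup F) = quotDim (U.inf F) U := by
  funext i
  have h : (U.sup F).dim i + (U.inf F).dim i = U.dim i + F.dim i :=
    Submodule.finrank_sup_add_finrank_inf_eq (U.S i) (F.S i)
  simp only [quotDim]
  omega

lemma quotDim_pos {T U : Subrep V} (h : SubrepLE T U) (hne : U.dim ≠ T.dim) :
    0 < quotDim T U := by
  obtain ⟨i, hi⟩ := Function.ne_iff.mp hne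
  have hle : ∀ j, T.dim j ≤ U.dim j := fun j => Submodule.finrank_mono (h j)
  refine Pi.lt_def.mpr ⟨fun j => ?_, i, ?_⟩
  · simpa [quotDim, sub_nonneg] using hle j
  · simpa [quotDim, sub_pos] using lt_of_le_of_ne (hle i) (Ne.symm hi)

/-- `F/T` is the maximal destabilizing subrepresentation of `V/T`. -/
structure IsHNFirstStep (θ : Q.V → ℤ) (a : Q.V → ℕ) (T F : Subrep V) : Prop where
  le : SubrepLE T F
  semistable : IsSemistableQuot θ a T F
  slope_lt : ∀ U, SubrepLE F U → U.dim ≠ F.dim →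
    slopeZ θ a (quotDim F U) < slopeZ θ a (quotDim T F)

namespace IsHNFirstStep

variable {T F U : Subrep V}

lemma slope_lt_of_not_le (ha : ∀ i, 0 < a i) (hF : IsHNFirstStep θ a T F)
    (hTU : SubrepLE T U) (hUF : ¬ SubrepLE U F) :
    slopeZ θ a (quotDim T U) < slopeZ θ a (quotDim T F) := by
  have hFsup : SubrepLE F (U.sup F) := fun i => le_sup_right
  have hinfF : SubrepLE (U.inf F) F := fun i => inf_le_right
  have hTinf : SubrepLE T (U.inf F) := fun i => le_inf (hTU i) (hF.le i)
  have hquot : slopeZ θ a (quotDim (U.inf F) U) < slopeZ θ a (quotDim T F) := by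
    rw [← quotDim_sup_eq_quotDim_inf]
    refine hF.slope_lt _ hFsup fun h => hUF fun i => ?_
    rw [Subrep.eq_of_le_of_dim_eq hFsup h.symm]
    exact le_sup_left
  by_cases hinfT : (U.inf F).dim = T.dim
  · have hq : quotDim T U = quotDim (U.inf F) U := by
      funext i
      simp only [quotDim, hinfT]
    rwa [hq]
  · have hne : U.dim ≠ (U.inf F).dim := fun h => hUF fun i => by
      rw [← Subrep.eq_of_le_of_dim_eq (fun i => inf_le_left) h.symm]
      exact hinfF i
    rw [← quotDim_add T (U.inf F) U]
    exact slopeZ_add_lt ha (quotDim_pos hTinf hinfT) (quotDim_pos (fun i => inf_le_left) hne)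
      (hF.semistable _ hTinf hinfF hinfT) hquot

lemma slope_le (ha : ∀ i, 0 < a i) (hF : IsHNFirstStep θ a T F) (hTU : SubrepLE T U)
    (hne : U.dim ≠ T.dim) : slopeZ θ a (quotDim T U) ≤ slopeZ θ a (quotDim T F) := by
  by_cases hUF : SubrepLE U F
  · exact hF.semistable U hTU hUF hne
  · exact (hF.slope_lt_of_not_le ha hTU hUF).le

lemma le_of_isHNFirstStep (ha : ∀ i, 0 < a i) {F' : Subrep V} (hF : IsHNFirstStep θ a T F)
    (hF' : IsHNFirstStep θ a T F') (hne' : F'.dim ≠ T.dim) : SubrepLE F F' := by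
  by_contra hFF'
  exact lt_irrefl _ ((hF'.slope_lt_of_not_le ha hF.le hFF').trans_le (hF.slope_le ha hF'.le hne'))

lemma unique (ha : ∀ i, 0 < a i) {F' : Subrep V} (hF : IsHNFirstStep θ a T F)
    (hF' : IsHNFirstStep θ a T F') (hne : F.dim ≠ T.dim) (hne' : F'.dim ≠ T.dim) : F = F' :=
  Subrep.ext fun i => le_antisymm (hF.le_of_isHNFirstStep ha hF' hne' i)
    (hF'.le_of_isHNFirstStep ha hF hne i)

end IsHNFirstStep

/-- A Harder–Narasimhan filtration of `V/T`, written as a chain of subrepresentations of `V`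
starting at `T`. -/
structure IsRelHNFiltration (θ : Q.V → ℤ) (a : Q.V → ℕ) (T : Subrep V) (ℓ : ℕ)
    (F : Fin (ℓ + 1) → Subrep V) : Prop where
  zero : F 0 = T
  last : F (Fin.last ℓ) = topSub V
  mono : ∀ i : Fin ℓ, SubrepLE (F i.castSucc) (F i.succ)
  proper : ∀ i : Fin ℓ, (F i.castSucc).dim ≠ (F i.succ).dim
  semistable : ∀ i : Fin ℓ, IsSemistableQuot θ a (F i.castSucc) (F i.succ)
  slopes : ∀ i j : Fin ℓ, i < j →
    slopeZ θ a (quotDim (F j.castSucc) (F j.succ)) <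
      slopeZ θ a (quotDim (F i.castSucc) (F i.succ))

lemma IsHNFiltration.isRelHNFiltration {ℓ : ℕ} {F : Fin (ℓ + 1) → Subrep V}
    (hF : IsHNFiltration θ a V ℓ F) : IsRelHNFiltration θ a (botSub V) ℓ F :=
  ⟨hF.zero, hF.last, hF.mono, hF.proper, hF.semistable, hF.slopes⟩

namespace IsRelHNFiltration

variable {T : Subrep V}

lemma base_eq_top {F : Fin 1 → Subrep V} (hF : IsRelHNFiltration θ a T 0 F) : T = topSub V :=
  hF.zero.symm.trans hF.last

variable {ℓ : ℕ} {F : Fin (ℓ + 2) → Subrep V}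

lemma le_one (hF : IsRelHNFiltration θ a T (ℓ + 1) F) : SubrepLE T (F 1) := by
  simpa [hF.zero] using hF.mono 0

lemma dim_one_ne (hF : IsRelHNFiltration θ a T (ℓ + 1) F) : (F 1).dim ≠ T.dim := by
  simpa [hF.zero] using (hF.proper 0).symm

lemma semistable_one (hF : IsRelHNFiltration θ a T (ℓ + 1) F) :
    IsSemistableQuot θ a T (F 1) := by
  simpa [hF.zero] using hF.semistable 0

lemma base_ne_top (hF : IsRelHNFiltration θ a T (ℓ + 1) F) : T ≠ topSub V := by
  rintro rfl
  exact hF.dim_one_ne (congrArg Subrep.dim (Subrep.eq_top_of_top_le hF.le_one))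

lemma tail (hF : IsRelHNFiltration θ a T (ℓ + 1) F) :
    IsRelHNFiltration θ a (F 1) ℓ (fun i => F i.succ) where
  zero := by simp
  last := hF.last
  mono i := by simpa using hF.mono i.succ
  proper i := by simpa using hF.proper i.succ
  semistable i := by simpa using hF.semistable i.succ
  slopes i j hij := by simpa using hF.slopes i.succ j.succ (by simpa using hij)

lemma slope_two_lt_one {F : Fin (ℓ + 3) → Subrep V} (hF : IsRelHNFiltration θ a T (ℓ + 2) F) :
    slopeZ θ a (quotDim (F 1) (F 2)) < slopeZ θ a (quotDim T (F 1)) := by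
  simpa [hF.zero] using hF.slopes 0 1 Fin.zero_lt_one

lemma isHNFirstStep_one (ha : ∀ i, 0 < a i) (hF : IsRelHNFiltration θ a T (ℓ + 1) F) :
    IsHNFirstStep θ a T (F 1) := by
  induction ℓ generalizing T with
  | zero =>
    refine ⟨hF.le_one, hF.semistable_one, fun U hU hne => absurd ?_ hne⟩
    have h1 : F 1 = topSub V := hF.last
    rw [h1] at hU ⊢
    rw [Subrep.eq_top_of_top_le hU]
  | succ m ih =>
    refine ⟨hF.le_one, hF.semistable_one, fun U hU hne => ?_⟩
    calc slopeZ θ a (quotDim (F 1) U) ≤ slopeZ θ a (quotDim (F 1) (F 2)) :=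
          (ih hF.tail).slope_le ha hU hne
      _ < slopeZ θ a (quotDim T (F 1)) := hF.slope_two_lt_one

theorem unique (ha : ∀ i, 0 < a i) {ℓ₁ ℓ₂ : ℕ} {F₁ : Fin (ℓ₁ + 1) → Subrep V}
    {F₂ : Fin (ℓ₂ + 1) → Subrep V} (h₁ : IsRelHNFiltration θ a T ℓ₁ F₁)
    (h₂ : IsRelHNFiltration θ a T ℓ₂ F₂) :
    ∃ h : ℓ₁ = ℓ₂, ∀ i : Fin (ℓ₁ + 1), F₁ i = F₂ (Fin.cast (by rw [h]) i) := by
  induction ℓ₁ generalizing T ℓ₂ with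
  | zero =>
    obtain _ | m₂ := ℓ₂
    · exact ⟨rfl, Fin.cases (h₁.zero.trans h₂.zero.symm) (fun i => i.elim0)⟩
    · exact absurd h₁.base_eq_top h₂.base_ne_top
  | succ m₁ ih =>
    obtain _ | m₂ := ℓ₂
    · exact absurd h₂.base_eq_top h₁.base_ne_top
    have hone : F₁ 1 = F₂ 1 := (h₁.isHNFirstStep_one ha).unique ha (h₂.isHNFirstStep_one ha)
      h₁.dim_one_ne h₂.dim_one_ne
    obtain ⟨rfl, htail⟩ := ih h₁.tail (hone ▸ h₂.tail)
    exact ⟨rfl, Fin.cases (h₁.zero.trans h₂.zero.symm) htail⟩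

end IsRelHNFiltration

end HNUniqueness

/-- uniqueness of the Harder–Narasimhan filtration. -/
theorem hn_filtration_unique (Q : Quiv) (k : Type) [Field k] (θ : Q.V → ℤ)
    (a : Q.V → ℕ) (ha : ∀ i, 0 < a i) (V : Rep Q k)
    (ℓ₁ ℓ₂ : ℕ) (F₁ : Fin (ℓ₁ + 1) → Subrep V) (F₂ : Fin (ℓ₂ + 1) → Subrep V)
    (h₁ : IsHNFiltration θ a V ℓ₁ F₁) (h₂ : IsHNFiltration θ a V ℓ₂ F₂) :
    ∃ h : ℓ₁ = ℓ₂, ∀ i : Fin (ℓ₁ + 1), F₁ i = F₂ (Fin.cast (by rw [h]) i) :=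
  h₁.isRelHNFiltration.unique ha h₂.isRelHNFiltration

end QT
end

section
/- Let Q be a quiver with slope function μ. If V and W are μ-semistable representations with μ(dim V) > μ(dim W), then Hom(V, W) = 0. -/
open Module

namespace QT

/-- The denominator of the slope is positive for a nonzero dimension vector. -/
lemma denom_pos {Q : Quiv} (a : Q.V → ℕ) (ha : ∀ i, 0 < a i) (e : Q.V → ℕ)
    (he : e ≠ 0) : 0 < ∑ i, (a i : ℚ) * (e i : ℚ) := by
  obtain ⟨j, hj⟩ := Function.ne_iff.mp he
  apply Finset.sum_pos' (fun i _ => by positivity)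
  refine ⟨j, Finset.mem_univ j, ?_⟩
  have hj' : 0 < e j := Nat.pos_of_ne_zero hj
  have := ha j
  positivity

lemma slope_eq {Q : Quiv} (θ : Q.V → ℤ) (a : Q.V → ℕ) (e : Q.V → ℕ) :
    slope θ a e = (∑ i, (θ i : ℚ) * (e i : ℚ)) / ∑ i, (a i : ℚ) * (e i : ℚ) := by
  unfold slope slopeZ castN
  push_cast
  rfl

/-- no nonzero morphisms from a semistable representation of larger
slope to a semistable representation of smaller slope. -/
theorem hom_vanishing_of_slope_gt (Q : Quiv) (k : Type) [Field k] (θ : Q.V → ℤ)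
    (a : Q.V → ℕ) (ha : ∀ i, 0 < a i) (V W : Rep Q k)
    (hV : RepNonzero V) (hW : RepNonzero W)
    (hssV : IsSemistable θ a V) (hssW : IsSemistable θ a W)
    (hlt : slope θ a (dimVec W) < slope θ a (dimVec V)) :
    ∀ φ : ∀ i, V.M i →ₗ[k] W.M i,
      (∀ b, W.f b ∘ₗ φ (Q.s b) = φ (Q.t b) ∘ₗ V.f b) → ∀ i, φ i = 0 := by
  intro φ hφ
  -- the kernel subrepresentation of V
  set K : Subrep V := ⟨fun i => LinearMap.ker (φ i), by
    intro b x hx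
    simp only [LinearMap.mem_ker] at hx ⊢
    have := congrArg (fun f => f x) (hφ b)
    simp only [LinearMap.comp_apply] at this
    rw [← this, hx, map_zero]⟩ with hK
  -- the image subrepresentation of W
  set I : Subrep W := ⟨fun i => LinearMap.range (φ i), by
    intro b y hy
    obtain ⟨x, rfl⟩ := hy
    have := congrArg (fun f => f x) (hφ b)
    simp only [LinearMap.comp_apply] at this
    exact ⟨V.f b x, this.symm⟩⟩ with hI
  -- rank-nullity, pointwise
  have hrn : ∀ i, I.dim i + K.dim i = dimVec V i := by
    intro i
    simpa [hI, hK, Subrep.dim, dimVec] using LinearMap.finrank_range_add_finrank_ker (φ i)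
  -- main claim: the image is zero
  have himzero : I.dim = 0 := by
    by_contra hIne
    have hWle : slope θ a I.dim ≤ slope θ a (dimVec W) := hssW I hIne
    have hVle : slope θ a (dimVec V) ≤ slope θ a I.dim := by
      by_cases hKz : K.dim = 0
      · have : I.dim = dimVec V := by
          funext i
          have := hrn i
          have h0 : K.dim i = 0 := congrFun hKz i
          omega
        rw [this]
      · -- seesaw argument
        have hVs : slope θ a K.dim ≤ slope θ a (dimVec V) := hssV K hKz
        have hDK : 0 < ∑ i, (a i : ℚ) * (K.dim i : ℚ) := denom_pos a ha _ hKz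
        have hDI : 0 < ∑ i, (a i : ℚ) * (I.dim i : ℚ) := denom_pos a ha _ hIne
        have hDV : 0 < ∑ i, (a i : ℚ) * (dimVec V i : ℚ) := denom_pos a ha _ hV
        rw [slope_eq, slope_eq] at hVs ⊢
        rw [div_le_div_iff₀ hDK hDV] at hVs
        rw [div_le_div_iff₀ hDV hDI]
        have hNsum : (∑ i, (θ i : ℚ) * (I.dim i : ℚ)) + (∑ i, (θ i : ℚ) * (K.dim i : ℚ))
            = ∑ i, (θ i : ℚ) * (dimVec V i : ℚ) := by
          rw [← Finset.sum_add_distrib]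
          congr 1; funext i
          rw [← mul_add]
          congr 1
          rw [← Nat.cast_add, hrn i]
        have hDsum : (∑ i, (a i : ℚ) * (I.dim i : ℚ)) + (∑ i, (a i : ℚ) * (K.dim i : ℚ))
            = ∑ i, (a i : ℚ) * (dimVec V i : ℚ) := by
          rw [← Finset.sum_add_distrib]
          congr 1; funext i
          rw [← mul_add]
          congr 1
          rw [← Nat.cast_add, hrn i]
        have hNi : (∑ i, (θ i : ℚ) * (I.dim i : ℚ))
            = (∑ i, (θ i : ℚ) * (dimVec V i : ℚ)) - ∑ i, (θ i : ℚ) * (K.dim i : ℚ) := by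
          linarith
        have hDi : (∑ i, (a i : ℚ) * (I.dim i : ℚ))
            = (∑ i, (a i : ℚ) * (dimVec V i : ℚ)) - ∑ i, (a i : ℚ) * (K.dim i : ℚ) := by
          linarith
        rw [hNi, hDi]
        nlinarith [hVs]
    have := lt_of_le_of_lt (hVle.trans hWle) hlt
    exact absurd this (lt_irrefl _)
  -- conclude φ = 0
  intro i
  have h0 : I.dim i = 0 := congrFun himzero i
  have : LinearMap.range (φ i) = ⊥ := Submodule.finrank_eq_zero.mp h0
  exact LinearMap.range_eq_bot.mp this

end QT
end

section
/- For any quiver Q and dimension vectors d, d', the equality hom(d,d') − ext(d,d') = ⟨d,d'⟩ holds, where hom and ext are the generic dimensions of Hom and Ext¹ and ⟨−,−⟩ is the Euler form. -/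
open Module

namespace QT

/-! `Hom(V,W)` and `Ext¹(V,W)` are the kernel and cokernel of the linear map `Phi V W`, so
`dim Hom(V,W) - dim Ext¹(V,W)` is the difference of the dimensions of its source and target,
which is `⟨dim V, dim W⟩`. The difference is therefore the same for all `V` and `W` of dimension
vectors `d` and `d'`, and so it is also the difference of the two minima. -/

theorem sInf_image_sub_sInf_image {X : Type*} {S : Set X} (hS : S.Nonempty) {h e : X → ℕ}
    {c : ℤ} (hc : ∀ x ∈ S, (h x : ℤ) - e x = c) :
    ((sInf (h '' S) : ℕ) : ℤ) - (sInf (e '' S) : ℕ) = c := by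
  obtain ⟨x, hxS, hx⟩ := Nat.sInf_mem (hS.image h)
  obtain ⟨y, hyS, hy⟩ := Nat.sInf_mem (hS.image e)
  have h_le : sInf (h '' S) ≤ h y := Nat.sInf_le ⟨y, hyS, rfl⟩
  have e_le : sInf (e '' S) ≤ e x := Nat.sInf_le ⟨x, hxS, rfl⟩
  have hcx := hc x hxS
  have hcy := hc y hyS
  omega

theorem finrank_ker_sub_finrank_quotient_range {K M N : Type*} [DivisionRing K]
    [AddCommGroup M] [Module K M] [FiniteDimensional K M]
    [AddCommGroup N] [Module K N] [FiniteDimensional K N] (f : M →ₗ[K] N) :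
    (finrank K (LinearMap.ker f) : ℤ) - finrank K (N ⧸ LinearMap.range f) =
      finrank K M - finrank K N := by
  have hM := f.finrank_range_add_finrank_ker
  have hN := (LinearMap.range f).finrank_quotient_add_finrank
  omega

theorem exists_rep_dimVec (Q : Quiv) (k : Type) [Field k] (d : Q.V → ℕ) :
    ∃ V : Rep Q k, dimVec V = d :=
  ⟨⟨fun i => Fin (d i) → k, fun _ => 0⟩, funext fun _ => finrank_fin_fun k⟩

theorem finrank_ker_Phi_sub_finrank_quotient_range {Q : Quiv} {k : Type} [Field k]
    (V W : Rep Q k) :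
    (finrank k (LinearMap.ker (Phi V W)) : ℤ) -
        finrank k ((∀ a, V.M (Q.s a) →ₗ[k] W.M (Q.t a)) ⧸ LinearMap.range (Phi V W)) =
      eulerForm Q (castN (dimVec V)) (castN (dimVec W)) := by
  rw [finrank_ker_sub_finrank_quotient_range, finrank_pi_fintype, finrank_pi_fintype]
  simp only [finrank_linearMap, eulerForm, castN, dimVec, Nat.cast_sum, Nat.cast_mul]

/-- `hom(d,d') - ext(d,d') = ⟨d,d'⟩`. -/
theorem generic_hom_sub_ext (Q : Quiv) (d d' : Q.V → ℕ) :
    (homDim Q d d' : ℤ) - (extDim Q d d' : ℤ) =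
      eulerForm Q (castN d) (castN d') := by
  let S : Set (Rep Q ℂ × Rep Q ℂ) := {p | dimVec p.1 = d ∧ dimVec p.2 = d'}
  have hS : S.Nonempty := by
    obtain ⟨V, hV⟩ := exists_rep_dimVec Q ℂ d
    obtain ⟨W, hW⟩ := exists_rep_dimVec Q ℂ d'
    exact ⟨(V, W), hV, hW⟩
  have hom_eq : homSet Q d d' = (fun p => finrank ℂ (LinearMap.ker (Phi p.1 p.2))) '' S := by
    ext n
    simp [homSet, S, eq_comm, and_assoc]
  have ext_eq : extSet Q d d' = (fun p => finrank ℂ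
      ((∀ a, p.1.M (Q.s a) →ₗ[ℂ] p.2.M (Q.t a)) ⧸ LinearMap.range (Phi p.1 p.2))) '' S := by
    ext n
    simp [extSet, S, eq_comm, and_assoc]
  rw [homDim, extDim, hom_eq, ext_eq]
  refine sInf_image_sub_sInf_image hS fun p ⟨hV, hW⟩ => ?_
  rw [finrank_ker_Phi_sub_finrank_quotient_range, hV, hW]

end QT
end
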